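/- arXiv:1110.6126 — 2 statements merged into one kernel-verified Lean document; each statement's English description precedes it below -/
import Mathlib

section
/- Let C = [x_{i_1}=y_1 ∧ … ∧ x_{i_k}=y_k] be any proper k-term with k ≤ M/2. Then Pr_D[C] ≥ (1 − k/M)·Pr_U[C] and Pr_U[C] ≥ (1 − k/M)·Pr_D[C]; consequently (1 − k/M)·M^{−k} ≤ Pr_D[C] ≤ (1 + 2k/M)·M^{−k}. -/
/-!
Averaging the kernel of `D_y` over a uniform `X` factorises over coordinates: each coordinate
contributes `1/(M-1) + 1 = M/(M-1)` if `z_i ≠ y` and `0` otherwise. Hence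
`Pr_D[Z] = #([M] ∖ Im Z) / (M (M-1)^N)`, and counting the strings of a proper `k`-term that avoid
`y` gives `Pr_D[C] = #([M] ∖ {y_1,…,y_k}) / (M (M-1)^k)`, against `Pr_U[C] = M^{-k}`. The two
multiplicative bounds then follow from `(M-1)^k ≤ M^k` and Bernoulli's inequality
`(1 - 1/M)^k ≥ 1 - k/M`, and the final upper bound from `(1 + 2t)(1 - t) ≥ 1` for `t ≤ 1/2`.
-/

namespace GLN

noncomputable section

open Finset

/-- `M = 2^m`. -/
def MM (m : ℕ) : ℕ := 2 ^ m

/-- `N = ⌈M · m · ln 2⌉`. -/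
def NN (m : ℕ) : ℕ := ⌈(MM m : ℝ) * m * Real.log 2⌉₊

/-- Strings `X ∈ [M]^N`. -/
abbrev Str (m : ℕ) := Fin (NN m) → Fin (MM m)

/-- The uniform probability mass function on `[M]^N`. -/
def umass (m : ℕ) (_X : Str m) : ℝ := 1 / (MM m : ℝ) ^ NN m

/-- The image `Im(X) ⊆ [M]` of a string, as a finset. -/
def img {m : ℕ} (X : Str m) : Finset (Fin (MM m)) := Finset.image X Finset.univ

/-- Transition kernel of `D_y(X)`: each coordinate with `x_i = y` is replaced by a uniform
independent sample from `[M] \ {y}`; other coordinates are unchanged. -/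
def kerDy (m : ℕ) (y : Fin (MM m)) (X Z : Str m) : ℝ :=
  ∏ i, if X i = y then (if Z i = y then 0 else 1 / ((MM m : ℝ) - 1))
       else (if Z i = X i then 1 else 0)

/-- Transition kernel of `D(X)`: choose `y` uniformly in `[M]`, then apply `D_y`. -/
def kerD (m : ℕ) (X Z : Str m) : ℝ := (1 / (MM m : ℝ)) * ∑ y, kerDy m y X Z

/-- The probability mass function of the distribution `D = D(U)`. -/
def dmass (m : ℕ) (Z : Str m) : ℝ := ∑ X, umass m X * kerD m X Z

/-- Transition kernel of `D_y^inv(Z)`: each coordinate is independently replaced by `y`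
with probability `1/M` and left unchanged otherwise. -/
def kerDinvy (m : ℕ) (y : Fin (MM m)) (Z W : Str m) : ℝ :=
  ∏ i, ((1 / (MM m : ℝ)) * (if W i = y then 1 else 0)
        + (1 - 1 / (MM m : ℝ)) * (if W i = Z i then 1 else 0))

/-- Transition kernel of `D^inv(Z)`: choose `y` uniformly in `[M] \ Im(Z)`,
then apply `D_y^inv`. -/
def kerDinv (m : ℕ) (Z W : Str m) : ℝ :=
  (1 / (((img Z)ᶜ.card : ℝ))) * ∑ y ∈ (img Z)ᶜ, kerDinvy m y Z W

/-- Probability of an event under a mass function. -/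
def pr {m : ℕ} (μ : Str m → ℝ) (E : Set (Str m)) : ℝ := ∑ X, E.indicator μ X

/-- Expectation of a real function under a mass function. -/
def ev {m : ℕ} (μ : Str m → ℝ) (g : Str m → ℝ) : ℝ := ∑ X, μ X * g X

/-- The surjectivity function `f_Surj`. -/
def fSurjB (m : ℕ) (X : Str m) : Bool := decide (img X = Finset.univ)

/-- The `q.2`-th bit of the binary encoding of coordinate `x_{q.1}` of `X`;
this realizes `X` as a string of `n = N·m` bits. -/
def bit {m : ℕ} (X : Str m) (q : Fin (NN m) × Fin m) : Bool :=
  Nat.testBit (X q.1).val q.2.val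

section

variable {ι κ α : Type*} [Fintype ι] [DecidableEq ι] [Fintype κ] [Fintype α] [DecidableEq α]

theorem card_filter_comp_eq_and_forall_mem {I : κ → ι} (hI : Function.Injective I)
    (Y : κ → α) (s : Finset α) :
    #{f : ι → α | (∀ j, f (I j) = Y j) ∧ ∀ i, f i ∈ s}
      = if ∀ j, Y j ∈ s then #s ^ (Fintype.card ι - Fintype.card κ) else 0 := by
  set t : ι → Finset α := fun i => {v ∈ s | ∀ j, I j = i → v = Y j}
  have hpi : ({f : ι → α | (∀ j, f (I j) = Y j) ∧ ∀ i, f i ∈ s} : Finset _)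
      = Fintype.piFinset t := by
    ext f
    simp only [t, mem_filter, mem_univ, true_and, Fintype.mem_piFinset]
    exact ⟨fun ⟨hY, hs⟩ i => ⟨hs i, fun j hj => hj ▸ hY j⟩,
      fun h => ⟨fun j => (h (I j)).2 j rfl, fun i => (h i).1⟩⟩
  have hrange : ∀ j, t (I j) = {v ∈ s | v = Y j} := fun j => by
    ext v; simp [t, hI.eq_iff]
  have hcompl : ∀ i ∈ (univ.image I)ᶜ, t i = s := fun i hi => by
    ext v
    simp only [mem_compl, mem_image, mem_univ, true_and, not_exists] at hi
    simp [t, hi]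
  rw [hpi, Fintype.card_piFinset, ← prod_mul_prod_compl (univ.image I), prod_image (by simpa),
    prod_congr rfl (fun i hi => congrArg card (hcompl i hi)), prod_const, card_compl,
    card_image_of_injective _ hI, card_univ]
  simp only [hrange, filter_eq', apply_ite card, card_singleton, card_empty]
  rw [prod_boole]
  simp

theorem card_filter_comp_eq {I : κ → ι} (hI : Function.Injective I) (Y : κ → α) :
    #{f : ι → α | ∀ j, f (I j) = Y j} = Fintype.card α ^ (Fintype.card ι - Fintype.card κ) := by
  simpa using card_filter_comp_eq_and_forall_mem hI Y univ

theorem card_filter_comp_eq_and_forall_ne {I : κ → ι} (hI : Function.Injective I)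
    (Y : κ → α) (y : α) :
    #{f : ι → α | (∀ j, f (I j) = Y j) ∧ ∀ i, f i ≠ y}
      = if ∀ j, Y j ≠ y then (Fintype.card α - 1) ^ (Fintype.card ι - Fintype.card κ) else 0 := by
  simpa using card_filter_comp_eq_and_forall_mem hI Y (univ.erase y)

theorem card_le_card_filter_forall_ne_add (Y : κ → α) :
    Fintype.card α ≤ #{y | ∀ j, Y j ≠ y} + Fintype.card κ := by
  have hcompl : ({y | ∀ j, Y j ≠ y} : Finset α) = (univ.image Y)ᶜ := by ext; simp
  have himage := card_image_le (s := univ) (f := Y)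
  rw [card_univ] at himage
  rw [hcompl, card_compl]
  omega

theorem sum_ite_eq_else_ite_eq (y z : α) (c : ℝ) :
    ∑ x, (if x = y then (if z = y then 0 else c) else (if z = x then 1 else 0))
      = if z = y then 0 else c + 1 := by
  split_ifs with h
  · subst h; simp +contextual [eq_comm]
  · calc _ = ∑ x, ((if x = y then c else 0) + if x = z then 1 else 0) := by
          refine sum_congr rfl fun x _ => ?_
          by_cases hx : x = y
          · simp [hx, Ne.symm h]
          · simp [hx, eq_comm]
      _ = c + 1 := by simp [sum_add_distrib]

end

theorem sum_kerDy (m : ℕ) (y : Fin (MM m)) (Z : Str m) :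
    ∑ X, kerDy m y X Z = if ∀ i, Z i ≠ y then (1 / ((MM m : ℝ) - 1) + 1) ^ NN m else 0 := by
  simp only [kerDy]
  rw [← Fintype.prod_sum fun i x => if x = y then (if Z i = y then (0 : ℝ) else 1 / ((MM m : ℝ) - 1))
      else (if Z i = x then 1 else 0),
    prod_congr rfl fun i _ => sum_ite_eq_else_ite_eq y (Z i) _]
  simp only [← ite_not (Z _ = y), prod_ite_zero, prod_const, card_univ, Fintype.card_fin]
  simp

theorem two_le_MM {m : ℕ} (hm : 1 ≤ m) : 2 ≤ MM m :=
  le_self_pow₀ one_le_two (by omega)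

theorem dmass_eq_sum {m : ℕ} (hm : 1 ≤ m) (Z : Str m) :
    dmass m Z = ∑ y, if ∀ i, Z i ≠ y then 1 / ((MM m : ℝ) * ((MM m : ℝ) - 1) ^ NN m) else 0 := by
  have h2M : (2 : ℝ) ≤ MM m := by exact_mod_cast two_le_MM hm
  have hM0 : (MM m : ℝ) ≠ 0 := by linarith
  have hM1 : (MM m : ℝ) - 1 ≠ 0 := by linarith
  simp only [dmass, umass, kerD, ← mul_sum]
  rw [sum_comm, mul_sum, mul_sum]
  refine sum_congr rfl fun y _ => ?_
  rw [sum_kerDy]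
  split_ifs
  · rw [div_add_one hM1, add_sub_cancel, div_pow]
    field_simp
  · simp

theorem pr_setOf {m : ℕ} (μ : Str m → ℝ) (P : Str m → Prop) [DecidablePred P] :
    pr μ {X | P X} = ∑ X with P X, μ X := by
  simp [pr, Set.indicator_apply, sum_ite]

theorem pr_umass_term {m k : ℕ} {I : Fin k → Fin (NN m)} (hI : Function.Injective I)
    (Y : Fin k → Fin (MM m)) :
    pr (umass m) {X : Str m | ∀ j, X (I j) = Y j} = 1 / (MM m : ℝ) ^ k := by
  have hM0 : (MM m : ℝ) ≠ 0 := by simp [MM]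
  have hkN : k ≤ NN m := by simpa using Fintype.card_le_of_injective I hI
  -- `convert` absorbs the mismatch between the decidability instances of the two filters.
  have hcard : #{X : Str m | ∀ j, X (I j) = Y j} = MM m ^ (NN m - k) := by
    convert card_filter_comp_eq hI Y <;> simp
  simp only [pr_setOf, umass, sum_const, nsmul_eq_mul, hcard, Nat.cast_pow, pow_sub₀ _ hM0 hkN]
  field_simp

theorem pr_dmass_term {m k : ℕ} (hm : 1 ≤ m) {I : Fin k → Fin (NN m)} (hI : Function.Injective I)
    (Y : Fin k → Fin (MM m)) :
    pr (dmass m) {X : Str m | ∀ j, X (I j) = Y j}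
      = #{y | ∀ j, Y j ≠ y} / ((MM m : ℝ) * ((MM m : ℝ) - 1) ^ k) := by
  have h2M : (2 : ℝ) ≤ MM m := by exact_mod_cast two_le_MM hm
  have hM1 : (MM m : ℝ) - 1 ≠ 0 := by linarith
  have hkN : k ≤ NN m := by simpa using Fintype.card_le_of_injective I hI
  have hcard (y : Fin (MM m)) : #{X : Str m | (∀ j, X (I j) = Y j) ∧ ∀ i, X i ≠ y}
      = if ∀ j, Y j ≠ y then (MM m - 1) ^ (NN m - k) else 0 := by
    convert card_filter_comp_eq_and_forall_ne hI Y y <;> simp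
  have hcast : ((MM m - 1 : ℕ) : ℝ) = MM m - 1 := by
    rw [Nat.cast_sub (by linarith [two_le_MM hm]), Nat.cast_one]
  simp only [pr_setOf, dmass_eq_sum hm]
  rw [sum_comm]
  simp only [sum_ite, sum_const_zero, add_zero, sum_const, filter_filter, nsmul_eq_mul, hcard,
    Nat.cast_ite, Nat.cast_zero, ← sum_mul, Nat.cast_pow, hcast, pow_sub₀ _ hM1 hkN]
  field_simp

theorem sub_mul_pow_le_mul_sub_one_pow {a : ℝ} (ha : 1 ≤ a) (k : ℕ) :
    (a - k) * a ^ k ≤ a * (a - 1) ^ k := by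
  have ha0 : a ≠ 0 := by positivity
  have hbernoulli := one_add_mul_le_pow (a := -a⁻¹) (by linarith [inv_le_one_of_one_le₀ ha]) k
  calc (a - k) * a ^ k = (1 + k * -a⁻¹) * a ^ (k + 1) := by field_simp; ring
    _ ≤ (1 + -a⁻¹) ^ k * a ^ (k + 1) := by gcongr
    _ = a * (a - 1) ^ k := by rw [pow_succ, ← mul_assoc, ← mul_pow]; field_simp; ring

theorem one_sub_div_mul_one_div_pow_le {a s : ℝ} {k : ℕ} (ha : 1 < a) (hka : k ≤ a)
    (hs : a - k ≤ s) :
    (1 - k / a) * (1 / a ^ k) ≤ s / (a * (a - 1) ^ k) := by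
  have ha0 : 0 < a := by linarith
  calc (1 - k / a) * (1 / a ^ k) = (a - k) / (a * a ^ k) := by field_simp
    _ ≤ s / (a * a ^ k) := by gcongr
    _ ≤ s / (a * (a - 1) ^ k) := by
      have : 0 < a - 1 := by linarith
      gcongr <;> linarith

theorem one_sub_div_mul_div_le_one_div_pow {a s : ℝ} {k : ℕ} (ha : 1 < a) (hka : k ≤ a)
    (hs : s ≤ a) :
    (1 - k / a) * (s / (a * (a - 1) ^ k)) ≤ 1 / a ^ k := by
  have ha0 : 0 < a := by linarith
  have ha1 : 0 < a - 1 := by linarith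
  calc (1 - k / a) * (s / (a * (a - 1) ^ k)) ≤ (1 - k / a) * (a / (a * (a - 1) ^ k)) := by
        gcongr
        rw [sub_nonneg, div_le_one ha0]
        exact hka
    _ = (a - k) * a ^ k / (a * (a - 1) ^ k) / a ^ k := by field_simp
    _ ≤ 1 / a ^ k := by
      gcongr
      rw [div_le_one (by positivity)]
      exact sub_mul_pow_le_mul_sub_one_pow ha.le k

theorem le_one_add_two_mul_of_one_sub_mul_le {t p q : ℝ} (ht : 0 ≤ t) (ht2 : 2 * t ≤ 1)
    (hp : 0 ≤ p) (h : (1 - t) * p ≤ q) : p ≤ (1 + 2 * t) * q := by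
  nlinarith [mul_nonneg (mul_nonneg ht (sub_nonneg.2 ht2)) hp]

/-- for any proper `k`-term `C = [x_{i_1}=y_1 ∧ … ∧ x_{i_k}=y_k]` with
`k ≤ M/2`: `Pr_D[C] ≥ (1 − k/M)·Pr_U[C]`, `Pr_U[C] ≥ (1 − k/M)·Pr_D[C]`, and consequently
`(1 − k/M)·M^{−k} ≤ Pr_D[C] ≤ (1 + 2k/M)·M^{−k}`. -/
theorem stmt5 (m k : ℕ) (hm : 1 ≤ m) (hk : 2 * k ≤ MM m)
    (I : Fin k → Fin (NN m)) (hI : Function.Injective I) (Y : Fin k → Fin (MM m))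
    (C : Set (Str m)) (hC : C = {X : Str m | ∀ j, X (I j) = Y j}) :
    (1 - (k : ℝ) / (MM m : ℝ)) * pr (umass m) C ≤ pr (dmass m) C ∧
    (1 - (k : ℝ) / (MM m : ℝ)) * pr (dmass m) C ≤ pr (umass m) C ∧
    (1 - (k : ℝ) / (MM m : ℝ)) * (1 / (MM m : ℝ) ^ k) ≤ pr (dmass m) C ∧
    pr (dmass m) C ≤ (1 + 2 * (k : ℝ) / (MM m : ℝ)) * (1 / (MM m : ℝ) ^ k) := by
  subst hC
  rw [pr_umass_term hI, pr_dmass_term hm hI]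
  have h2M : (2 : ℝ) ≤ MM m := by exact_mod_cast two_le_MM hm
  have hkM : 2 * (k : ℝ) ≤ MM m := by exact_mod_cast hk
  have hsk : (MM m : ℝ) - k ≤ #{y | ∀ j, Y j ≠ y} := by
    have := card_le_card_filter_forall_ne_add Y
    simp only [Fintype.card_fin] at this
    rw [sub_le_iff_le_add]
    exact_mod_cast this
  have hsM : (#{y | ∀ j, Y j ≠ y} : ℝ) ≤ MM m := by
    exact_mod_cast (card_le_univ _).trans_eq (Fintype.card_fin _)
  have hlower := one_sub_div_mul_one_div_pow_le (by linarith) (by linarith) hsk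
  have hupper := one_sub_div_mul_div_le_one_div_pow (k := k) (by linarith) (by linarith) hsM
  refine ⟨hlower, hupper, hlower, ?_⟩
  have hpos : (0 : ℝ) ≤ #{y | ∀ j, Y j ≠ y} / (MM m * (MM m - 1) ^ k) :=
    div_nonneg (Nat.cast_nonneg _) (mul_nonneg (by linarith) (pow_nonneg (by linarith) k))
  rw [mul_div_assoc]
  refine le_one_add_two_mul_of_one_sub_mul_le (by positivity) ?_ hpos hupper
  rw [← mul_div_assoc, div_le_one (by linarith)]
  exact hkM

end
end GLN
end

section
/- Let p : {0,1}^n → ℝ be written as a linear combination of Boolean terms, p = Σ_C α_C·C, where every term C appearing with α_C ≠ 0 has width |C| ≤ d, and suppose d ≤ M/2. Then E_{X∼U}[p(X)] − E_{Z∼D}[p(Z)] ≤ (2d/M)·Σ_C |α_C|·2^{−|C|}, and likewise |E_U[p] − E_D[p]| ≤ (2d/M)·Σ_C |α_C|·2^{−|C|}. -/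
/-!
Conditionally on `y`, the coordinates of a sample of `D` are independent and uniform on
`[M] ∖ {y}`: a coordinate equal to `y` is resampled there, and any other one already is
uniform there. A term `C` is a product of one-coordinate factors `hᵢ ∈ {0, 1}`; with
`cᵢ = Σ_z hᵢ(z)` this gives `E_U[C] = ∏ cᵢ / M` and `E_D[C] = avg_y ∏ (cᵢ - hᵢ(y)) / (M - 1)`,
where only the `s ≤ |C|` coordinates read by `C` contribute. Since
`∏ cᵢ - Σⱼ hⱼ(y) ∏_{i ≠ j} cᵢ ≤ ∏ (cᵢ - hᵢ(y)) ≤ ∏ cᵢ` and, by Bernoulli,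
`1 - s/M ≤ ((M - 1)/M)^s ≤ 1`, one gets `|E_U[C] - E_D[C]| ≤ (2s/M) E_U[C] ≤ (2|C|/M) 2^{-|C|}`
when `2s ≤ M`. The theorem follows by linearity and the triangle inequality.
-/

namespace GLN

noncomputable section

open Finset

theorem abs_sub_le_of_scaled_bounds {u e r x : ℝ} (hu : 0 ≤ u) (hx : x ≤ 1 / 2)
    (hr : 1 - x ≤ r) (hr1 : r ≤ 1) (hlow : (1 - x) * u ≤ r * e) (hup : r * e ≤ u) :
    |u - e| ≤ 2 * x * u := by
  have hr0 : 0 < r := by linarith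
  have he : 0 ≤ e := by nlinarith
  rw [abs_le]
  constructor <;> nlinarith

theorem one_sub_div_le_sub_one_div_pow {M : ℝ} (hM : 1 ≤ M) (n : ℕ) :
    1 - n / M ≤ ((M - 1) / M) ^ n := by
  have h2 : -2 ≤ -1 / M := by
    rw [neg_div, neg_le_neg_iff, div_le_iff₀ (by positivity)]
    linarith
  have e1 : 1 + n * (-1 / M) = 1 - n / M := by ring
  have e2 : 1 + -1 / M = (M - 1) / M := by field_simp; ring
  simpa only [e1, e2] using one_add_mul_le_pow h2 n

theorem prod_sub_sum_mul_prod_erase_le_prod_sub {ι : Type*} [DecidableEq ι] {s : Finset ι}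
    {f g : ι → ℝ} (hg : ∀ i ∈ s, 0 ≤ g i) (hgf : ∀ i ∈ s, g i ≤ f i) :
    ∏ i ∈ s, f i - ∑ i ∈ s, g i * ∏ j ∈ s.erase i, f j ≤ ∏ i ∈ s, (f i - g i) := by
  induction s using Finset.induction_on with
  | empty => simp
  | insert a s ha ih =>
    simp only [mem_insert, forall_eq_or_imp] at hg hgf
    have hsum : ∑ i ∈ s, g i * ∏ j ∈ (insert a s).erase i, f j
        = f a * ∑ i ∈ s, g i * ∏ j ∈ s.erase i, f j := by
      rw [mul_sum]
      refine sum_congr rfl fun i hi => ?_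
      rw [erase_insert_of_ne (ne_of_mem_of_not_mem hi ha).symm,
        prod_insert fun h => ha (mem_of_mem_erase h)]
      ring
    have hle : ∏ i ∈ s, (f i - g i) ≤ ∏ i ∈ s, f i :=
      prod_le_prod (fun i hi => sub_nonneg.2 (hgf.2 i hi)) fun i hi => sub_le_self _ (hg.2 i hi)
    rw [prod_insert ha, prod_insert ha, sum_insert ha, erase_insert ha, hsum]
    nlinarith [mul_le_mul_of_nonneg_left (ih hg.2 hgf.2) (hg.1.trans hgf.1),
      mul_le_mul_of_nonneg_left hle hg.1]

section Averaging

variable {ι α : Type*} [Fintype α] {S : Finset ι} {b : ι → α → ℝ}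

theorem sum_prod_sum_sub_le (hb : ∀ i z, 0 ≤ b i z) :
    ∑ y, ∏ i ∈ S, (∑ z, b i z - b i y) ≤ Fintype.card α * ∏ i ∈ S, ∑ z, b i z := by
  calc ∑ y, ∏ i ∈ S, (∑ z, b i z - b i y) ≤ ∑ _y : α, ∏ i ∈ S, ∑ z, b i z :=
        sum_le_sum fun y _ => prod_le_prod
          (fun i _ => sub_nonneg.2 (single_le_sum (fun z _ => hb i z) (mem_univ y)))
          fun i _ => sub_le_self _ (hb i y)
    _ = _ := by rw [sum_const, card_univ, nsmul_eq_mul]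

theorem sub_card_mul_prod_sum_le [DecidableEq ι] (hb : ∀ i z, 0 ≤ b i z) :
    (Fintype.card α - #S) * ∏ i ∈ S, ∑ z, b i z ≤ ∑ y, ∏ i ∈ S, (∑ z, b i z - b i y) := by
  have hcross : ∑ y, ∑ i ∈ S, b i y * ∏ j ∈ S.erase i, ∑ z, b j z
      = #S * ∏ i ∈ S, ∑ z, b i z := by
    rw [sum_comm]
    simp_rw [← sum_mul]
    rw [sum_congr rfl fun i hi => mul_prod_erase S (fun i => ∑ z, b i z) hi, sum_const,
      nsmul_eq_mul]
  calc (Fintype.card α - #S) * ∏ i ∈ S, ∑ z, b i z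
      = ∑ y, (∏ i ∈ S, ∑ z, b i z - ∑ i ∈ S, b i y * ∏ j ∈ S.erase i, ∑ z, b j z) := by
        rw [sum_sub_distrib, hcross, sum_const, card_univ, nsmul_eq_mul, sub_mul]
    _ ≤ _ := sum_le_sum fun y _ => prod_sub_sum_mul_prod_erase_le_prod_sub
        (fun i _ => hb i y) fun i _ => single_le_sum (fun z _ => hb i z) (mem_univ y)

theorem abs_prod_mean_sub_avg_prod_le [DecidableEq ι] [Nontrivial α] {h : ι → α → ℝ}
    (h0 : ∀ i z, 0 ≤ h i z) (hS : 2 * #S ≤ Fintype.card α) :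
    |∏ i ∈ S, (∑ z, h i z) / Fintype.card α
        - (∑ y, ∏ i ∈ S, (∑ z, h i z - h i y) / (Fintype.card α - 1)) / Fintype.card α|
      ≤ 2 * #S / Fintype.card α * ∏ i ∈ S, (∑ z, h i z) / Fintype.card α := by
  set M : ℝ := (Fintype.card α : ℝ)
  have hM : 1 < M := Nat.one_lt_cast.2 Fintype.one_lt_card
  set b : ι → α → ℝ := fun i z => h i z / M
  have hb : ∀ i z, 0 ≤ b i z := fun i z => div_nonneg (h0 i z) (by positivity)
  have hU : ∏ i ∈ S, (∑ z, h i z) / M = ∏ i ∈ S, ∑ z, b i z := by simp_rw [b, sum_div]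
  -- Scaling by `((M - 1) / M) ^ #S` replaces each denominator `M - 1` by `M`.
  have hD : ((M - 1) / M) ^ #S * ((∑ y, ∏ i ∈ S, (∑ z, h i z - h i y) / (M - 1)) / M)
      = (∑ y, ∏ i ∈ S, (∑ z, b i z - b i y)) / M := by
    rw [mul_div_assoc', mul_sum]
    congr 1
    refine sum_congr rfl fun y _ => ?_
    rw [pow_card_mul_prod]
    refine prod_congr rfl fun i _ => ?_
    simp only [b, ← sum_div]
    field_simp [(by linarith : M - 1 ≠ 0)]
  have hr : 1 - #S / M ≤ ((M - 1) / M) ^ #S := one_sub_div_le_sub_one_div_pow hM.le #S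
  have hr1 : ((M - 1) / M) ^ #S ≤ 1 :=
    pow_le_one₀ (div_nonneg (by linarith) (by positivity))
      ((div_le_one (by positivity)).2 (by linarith))
  have hx : #S / M ≤ 1 / 2 := by
    have : (2 * #S : ℝ) ≤ M := by simp only [M]; exact_mod_cast hS
    rw [div_le_iff₀ (by positivity)]
    linarith
  have hP : 0 ≤ ∏ i ∈ S, ∑ z, b i z := prod_nonneg fun i _ => sum_nonneg fun z _ => hb i z
  rw [hU, mul_div_assoc]
  refine abs_sub_le_of_scaled_bounds hP hx hr hr1 ?_ ?_ <;> rw [hD]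
  · rw [le_div_iff₀ (by positivity)]
    calc (1 - #S / M) * (∏ i ∈ S, ∑ z, b i z) * M = (M - #S) * ∏ i ∈ S, ∑ z, b i z := by
          field_simp
      _ ≤ _ := sub_card_mul_prod_sum_le hb
  · rw [div_le_iff₀ (by positivity), mul_comm]
    exact sum_prod_sum_sub_le hb

end Averaging

theorem card_filter_testBit_le {m : ℕ} (T : Finset (Fin m)) (c : Fin m → Bool) :
    #{z : Fin (2 ^ m) | ∀ j ∈ T, z.val.testBit j = c j} ≤ 2 ^ (m - #T) := by
  -- A pattern-matching `z` is determined by its bits outside `T`.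
  calc #{z : Fin (2 ^ m) | ∀ j ∈ T, z.val.testBit j = c j}
      ≤ #(univ : Finset (↥(Tᶜ : Finset (Fin m)) → Bool)) := by
        refine card_le_card_of_injOn (fun z (j : ↥(Tᶜ : Finset (Fin m))) => z.val.testBit j)
          (fun _ _ => mem_univ _) ?_
        intro z₁ hz₁ z₂ hz₂ heq
        simp only [coe_filter, mem_univ, true_and, Set.mem_ofPred_eq] at hz₁ hz₂
        refine Fin.ext (Nat.eq_of_testBit_eq fun j => ?_)
        by_cases hj : j < m
        · by_cases hT : (⟨j, hj⟩ : Fin m) ∈ T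
          · exact (hz₁ _ hT).trans (hz₂ _ hT).symm
          · exact congrFun heq ⟨⟨j, hj⟩, mem_compl.2 hT⟩
        · have hpow : 2 ^ m ≤ 2 ^ j := Nat.pow_le_pow_right two_pos (not_lt.1 hj)
          rw [Nat.testBit_lt_two_pow (z₁.isLt.trans_le hpow),
            Nat.testBit_lt_two_pow (z₂.isLt.trans_le hpow)]
    _ = 2 ^ (m - #T) := by simp

theorem sum_card_slice_eq_card {ι κ : Type*} [Fintype ι] [Fintype κ] [DecidableEq ι]
    [DecidableEq κ] (V : Finset (ι × κ)) : ∑ i, #{j | (i, j) ∈ V} = #V := by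
  calc ∑ i, #{j | (i, j) ∈ V} = ∑ q : ι × κ, if q ∈ V then 1 else 0 := by
        simp only [card_filter, Fintype.sum_prod_type]
    _ = #V := by rw [sum_boole, filter_univ_mem, Nat.cast_id]

def massAvoiding {n : ℕ} (y z : Fin n) : ℝ := if z = y then 0 else 1 / ((n : ℝ) - 1)

theorem sum_massAvoiding_mul {n : ℕ} (y : Fin n) (f : Fin n → ℝ) :
    ∑ z, massAvoiding y z * f z = (∑ z, f z - f y) / ((n : ℝ) - 1) := by
  have h : ∀ z, massAvoiding y z * f z
      = f z / ((n : ℝ) - 1) - if z = y then f y / ((n : ℝ) - 1) else 0 := by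
    intro z
    unfold massAvoiding
    split_ifs with hz
    · subst hz; ring
    · ring
  rw [sum_congr rfl fun z _ => h z, sum_sub_distrib, sum_ite_eq', if_pos (mem_univ y),
    ← sum_div, sub_div]

theorem sum_kerDy_factor {n : ℕ} (hn : 1 < n) (y z : Fin n) :
    ∑ x, 1 / (n : ℝ) * (if x = y then (if z = y then 0 else 1 / ((n : ℝ) - 1))
      else (if z = x then 1 else 0)) = massAvoiding y z := by
  unfold massAvoiding
  by_cases hzy : z = y
  · subst hzy
    simp +contextual [eq_comm]
  · rw [Fintype.sum_eq_add y z (Ne.symm hzy) fun x hx => by simp [hx.1, Ne.symm hx.2]]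
    have : (n : ℝ) - 1 ≠ 0 := sub_ne_zero.2 (by exact_mod_cast hn.ne')
    simp only [if_pos, if_neg hzy]
    field_simp
    ring

section Distributions

variable {m : ℕ}

theorem one_lt_MM (hm : 1 ≤ m) : 1 < MM m := Nat.one_lt_two_pow (by omega)

theorem ev_sum_mul {τ : Type*} (μ : Str m → ℝ) (s : Finset τ) (c : τ → ℝ)
    (g : τ → Str m → ℝ) :
    ev μ (fun X => ∑ t ∈ s, c t * g t X) = ∑ t ∈ s, c t * ev μ (g t) := by
  simp only [ev, mul_sum]
  rw [sum_comm]
  exact sum_congr rfl fun t _ => sum_congr rfl fun X _ => by ring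

theorem ev_prod_prod (g f : Fin (NN m) → Fin (MM m) → ℝ) :
    ev (fun Z : Str m => ∏ i, g i (Z i)) (fun Z => ∏ i, f i (Z i))
      = ∏ i, ∑ z, g i z * f i z := by
  simp only [ev, ← prod_mul_distrib]
  exact (Fintype.prod_sum fun i z => g i z * f i z).symm

theorem ev_umass_prod (f : Fin (NN m) → Fin (MM m) → ℝ) :
    ev (umass m) (fun Z => ∏ i, f i (Z i)) = ∏ i, (∑ z, f i z) / MM m := by
  have h := ev_prod_prod (fun _ _ => 1 / (MM m : ℝ)) f
  simp only [prod_const, card_univ, Fintype.card_fin, one_div_pow, one_div_mul_eq_div,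
    ← sum_div] at h
  exact h

theorem dmass_eq (hm : 1 ≤ m) (Z : Str m) :
    dmass m Z = (∑ y, ∏ i, massAvoiding y (Z i)) / MM m := by
  simp_rw [← sum_kerDy_factor (one_lt_MM hm), Fintype.prod_sum, prod_mul_distrib, prod_const,
    card_univ, Fintype.card_fin]
  rw [sum_comm, sum_div]
  simp only [dmass, umass, kerD, kerDy, mul_sum, sum_div]
  refine sum_congr rfl fun X _ => sum_congr rfl fun y _ => ?_
  ring

theorem ev_dmass_prod (hm : 1 ≤ m) (f : Fin (NN m) → Fin (MM m) → ℝ) :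
    ev (dmass m) (fun Z => ∏ i, f i (Z i))
      = (∑ y, ∏ i, (∑ z, f i z - f i y) / ((MM m : ℝ) - 1)) / MM m := by
  have h : ev (dmass m) (fun Z => ∏ i, f i (Z i))
      = (∑ y, ev (fun Z : Str m => ∏ i, massAvoiding y (Z i)) (fun Z => ∏ i, f i (Z i)))
          / MM m := by
    simp only [ev, dmass_eq hm, sum_div, sum_mul, div_mul_eq_mul_div]
    exact sum_comm
  simp only [h, ev_prod_prod, sum_massAvoiding_mul]

end Distributions

section Terms

variable {m : ℕ} (V : Finset (Fin (NN m) × Fin m)) (a : Fin (NN m) × Fin m → Bool)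

def boolTerm (Z : Str m) : ℝ := if ∀ q ∈ V, bit Z q = a q then 1 else 0

def patternFactor (i : Fin (NN m)) (z : Fin (MM m)) : ℝ :=
  if ∀ j ∈ ({j | (i, j) ∈ V} : Finset (Fin m)), z.val.testBit j = a (i, j) then 1 else 0

theorem patternFactor_nonneg (i : Fin (NN m)) (z : Fin (MM m)) : 0 ≤ patternFactor V a i z := by
  unfold patternFactor
  positivity

theorem sum_patternFactor_div_nonneg (i : Fin (NN m)) :
    0 ≤ (∑ z, patternFactor V a i z) / MM m :=
  div_nonneg (sum_nonneg fun z _ => patternFactor_nonneg V a i z) (Nat.cast_nonneg _)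

theorem boolTerm_eq_prod_patternFactor :
    boolTerm V a = fun Z => ∏ i, patternFactor V a i (Z i) := by
  funext Z
  simp [boolTerm, patternFactor, prod_boole, bit, Prod.forall]

theorem sum_patternFactor_div_le (i : Fin (NN m)) :
    (∑ z, patternFactor V a i z) / MM m ≤ (2⁻¹ : ℝ) ^ #{j | (i, j) ∈ V} := by
  set T : Finset (Fin m) := {j | (i, j) ∈ V}
  have hT : #T ≤ m := by simpa using card_le_univ T
  calc (∑ z, patternFactor V a i z) / MM m
      = (#{z : Fin (2 ^ m) | ∀ j ∈ T, z.val.testBit j = a (i, j)} : ℝ) / 2 ^ m := by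
        simp only [patternFactor, sum_boole, MM, Nat.cast_pow, Nat.cast_ofNat]
        rfl
    _ ≤ (2 ^ (m - #T) : ℕ) / 2 ^ m := by
        gcongr
        exact card_filter_testBit_le T _
    _ = 2⁻¹ ^ #T := by
        rw [Nat.cast_pow, Nat.cast_two, pow_sub₀ _ two_ne_zero hT, inv_pow]
        field_simp

theorem ev_umass_boolTerm_le : ev (umass m) (boolTerm V a) ≤ (2⁻¹ : ℝ) ^ #V := by
  rw [boolTerm_eq_prod_patternFactor, ev_umass_prod]
  calc ∏ i, (∑ z, patternFactor V a i z) / MM m ≤ ∏ i, (2⁻¹ : ℝ) ^ #{j | (i, j) ∈ V} :=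
        prod_le_prod (fun i _ => sum_patternFactor_div_nonneg V a i)
          fun i _ => sum_patternFactor_div_le V a i
    _ = 2⁻¹ ^ #V := by rw [prod_pow_eq_pow_sum, sum_card_slice_eq_card]

theorem abs_ev_umass_sub_ev_dmass_boolTerm_le (hm : 1 ≤ m) (hV : 2 * #V ≤ MM m) :
    |ev (umass m) (boolTerm V a) - ev (dmass m) (boolTerm V a)|
      ≤ 2 * #V / MM m * (2⁻¹ : ℝ) ^ #V := by
  have : Nontrivial (Fin (MM m)) := Fin.nontrivial_iff_two_le.2 (one_lt_MM hm)
  set S := V.image Prod.fst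
  have hM0 : (MM m : ℝ) ≠ 0 := by simp [MM]
  have hM1 : (MM m : ℝ) - 1 ≠ 0 := sub_ne_zero.2 (by exact_mod_cast (one_lt_MM hm).ne')
  have hout : ∀ i ∉ S, ∀ z, patternFactor V a i z = 1 := by
    intro i hi z
    refine if_pos fun j hj => absurd ?_ hi
    exact mem_image_of_mem Prod.fst (mem_filter.1 hj).2
  have hU : ∏ i, (∑ z, patternFactor V a i z) / MM m
      = ∏ i ∈ S, (∑ z, patternFactor V a i z) / MM m :=
    (prod_subset (subset_univ S) fun i _ hi => by simp [hout i hi, hM0]).symm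
  have hD : ∀ y, ∏ i, (∑ z, patternFactor V a i z - patternFactor V a i y) / ((MM m : ℝ) - 1)
      = ∏ i ∈ S, (∑ z, patternFactor V a i z - patternFactor V a i y) / ((MM m : ℝ) - 1) :=
    fun y => (prod_subset (subset_univ S) fun i _ hi => by simp [hout i hi, hM1]).symm
  have hSV : #S ≤ #V := card_image_le
  have key := abs_prod_mean_sub_avg_prod_le (S := S) (patternFactor_nonneg V a)
    (by rw [Fintype.card_fin]; omega)
  rw [Fintype.card_fin] at key
  have hUle := ev_umass_boolTerm_le V a
  rw [boolTerm_eq_prod_patternFactor, ev_umass_prod, hU] at hUle ⊢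
  rw [ev_dmass_prod hm]
  simp only [hD]
  refine key.trans (mul_le_mul ?_ hUle
    (prod_nonneg fun i _ => sum_patternFactor_div_nonneg V a i) (by positivity))
  gcongr

end Terms

/-- if `p = Σ_C α_C·C` is a linear combination of Boolean terms over the `n = Nm`
encoding bits, every term with nonzero coefficient having width at most `d ≤ M/2`, then
`E_U[p] − E_D[p] ≤ (2d/M)·Σ_C |α_C|·2^{−|C|}`, and likewise for the absolute value. -/
theorem stmt16 (m d r : ℕ) (hm : 1 ≤ m) (hd : 2 * d ≤ MM m)
    (V : Fin r → Finset (Fin (NN m) × Fin m))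
    (a : Fin r → Fin (NN m) × Fin m → Bool)
    (α : Fin r → ℝ) (hwidth : ∀ t, α t ≠ 0 → (V t).card ≤ d)
    (p : Str m → ℝ)
    (hp : ∀ X, p X = ∑ t, α t * (if ∀ q ∈ V t, bit X q = a t q then (1 : ℝ) else 0)) :
    ev (umass m) p - ev (dmass m) p ≤
      (2 * (d : ℝ) / (MM m : ℝ)) * ∑ t, |α t| * (2 : ℝ)⁻¹ ^ (V t).card ∧
    |ev (umass m) p - ev (dmass m) p| ≤
      (2 * (d : ℝ) / (MM m : ℝ)) * ∑ t, |α t| * (2 : ℝ)⁻¹ ^ (V t).card := by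
  obtain rfl : p = fun X => ∑ t, α t * boolTerm (V t) (a t) X := funext hp
  have hterm : ∀ t,
      |α t| * |ev (umass m) (boolTerm (V t) (a t)) - ev (dmass m) (boolTerm (V t) (a t))|
      ≤ |α t| * (2 * d / MM m * 2⁻¹ ^ #(V t)) := by
    intro t
    rcases eq_or_ne (α t) 0 with h0 | h0
    · simp [h0]
    · have hw := hwidth t h0
      gcongr
      refine (abs_ev_umass_sub_ev_dmass_boolTerm_le (V t) (a t) hm (by omega)).trans ?_
      gcongr
  have habs : |ev (umass m) (fun X => ∑ t, α t * boolTerm (V t) (a t) X)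
        - ev (dmass m) (fun X => ∑ t, α t * boolTerm (V t) (a t) X)|
      ≤ 2 * d / MM m * ∑ t, |α t| * 2⁻¹ ^ #(V t) := by
    rw [ev_sum_mul, ev_sum_mul, ← sum_sub_distrib, mul_sum]
    refine (abs_sum_le_sum_abs _ _).trans (sum_le_sum fun t _ => ?_)
    rw [← mul_sub, abs_mul]
    exact (hterm t).trans_eq (by ring)
  exact ⟨(le_abs_self _).trans habs, habs⟩

end
end GLN
end
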